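/- For each k ≥ 1, the polynomial function r_k(f) = ∫ f^k vol(ξ,η) on even elements f of the Grassmann algebra is invariant under the adjoint action of the Poisson superalgebra: ∫ {g, f}·f^{k-1}·k vol = 0, i.e., the directional derivative of r_k along ad_g vanishes for every g. -/

import Mathlib

/- The Grassmann algebra Λ[ξ₁,…,ξₙ,η₁,…,ηₙ] over ℂ, modelled as the exterior
algebra on the 2n-dimensional space `Fin n ⊕ Fin n → ℂ`. -/

noncomputable section

open CliffordAlgebra

/-- The Grassmann algebra on generators ξ_i, η_i. -/
abbrev Grass (n : ℕ) := ExteriorAlgebra ℂ (Fin n ⊕ Fin n → ℂ)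

/-- The generator ξ_i. -/
def ξ (n : ℕ) (i : Fin n) : Grass n := ExteriorAlgebra.ι ℂ (Pi.single (Sum.inl i) 1)

/-- The generator η_i. -/
def η (n : ℕ) (i : Fin n) : Grass n := ExteriorAlgebra.ι ℂ (Pi.single (Sum.inr i) 1)

/-- The odd superderivation ∂/∂ξ_i (contraction with the dual of ξ_i). -/
def Dξ (n : ℕ) (i : Fin n) : Grass n →ₗ[ℂ] Grass n :=
  contractLeft (Q := (0 : QuadraticForm ℂ (Fin n ⊕ Fin n → ℂ))) (LinearMap.proj (Sum.inl i))

/-- The odd superderivation ∂/∂η_i. -/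
def Dη (n : ℕ) (i : Fin n) : Grass n →ₗ[ℂ] Grass n :=
  contractLeft (Q := (0 : QuadraticForm ℂ (Fin n ⊕ Fin n → ℂ))) (LinearMap.proj (Sum.inr i))

/-- The sign-twisted derivative `f ↦ (-1)^{p(f)} D f`.  Since `D` reverses parity,
`(-1)^{p(f)} D f = - involute (D f)` for homogeneous `f`, and the right-hand side is linear. -/
def tw {n : ℕ} (D : Grass n →ₗ[ℂ] Grass n) : Grass n →ₗ[ℂ] Grass n :=
  - (involute.toLinearMap ∘ₗ D)

/-- The Poisson bracket {f,g} = (-1)^{p(f)} Σ_i (∂f/∂ξ_i ∂g/∂η_i + ∂f/∂η_i ∂g/∂ξ_i). -/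
def pbr {n : ℕ} (f g : Grass n) : Grass n :=
  ∑ i : Fin n, (tw (Dξ n i) f * Dη n i g + tw (Dη n i) f * Dξ n i g)


/-- The Berezin integral on the Grassmann algebra: the coefficient of the top monomial
ξ₁⋯ξₙη₁⋯ηₙ, obtained by contracting with all 2n generators and taking the constant term. -/
def berezin (n : ℕ) : Grass n →ₗ[ℂ] ℂ :=
  (ExteriorAlgebra.algebraMapInv).toLinearMap ∘ₗ
    (((List.ofFn fun i : Fin n => Dξ n i) ++ (List.ofFn fun i : Fin n => Dη n i)).foldl
      (fun acc d => d ∘ₗ acc) LinearMap.id)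

/-!
Each `∂_j` is an odd derivation and an even `f` is central, so `{g, f^(m+1)} = (m+1) {g, f} f^m`.
The Berezin integral is a composite of all the `∂_j`, which anticommute and square to zero, so it
kills every `∂_j x`. Integrating by parts then turns `∫ {g, F}` into
`-∫ g (∂_{ξ_i} ∂_{η_i} + ∂_{η_i} ∂_{ξ_i}) F = 0`.
-/

section Contraction

variable {R M : Type*} [CommRing R] [AddCommGroup M] [Module R M]

theorem CliffordAlgebra.contractLeft_mul {Q : QuadraticForm R M} (d : Module.Dual R M)
    (x y : CliffordAlgebra Q) :
    contractLeft d (x * y) = contractLeft d x * y + involute x * contractLeft d y := by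
  induction x using CliffordAlgebra.induction generalizing y with
  | algebraMap r =>
    rw [contractLeft_algebraMap, AlgHom.commutes, zero_mul, zero_add, contractLeft_algebraMap_mul]
  | ι m =>
    rw [contractLeft_ι_mul, contractLeft_ι, involute_ι, Algebra.smul_def, neg_mul,
      sub_eq_add_neg]
  | mul a b ha hb =>
    rw [mul_assoc, ha, hb, ha, map_mul]
    noncomm_ring
  | add a b ha hb =>
    simp only [add_mul, map_add, ha, hb]
    abel

theorem CliffordAlgebra.contractLeft_involute {Q : QuadraticForm R M} (d : Module.Dual R M)
    (x : CliffordAlgebra Q) :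
    contractLeft d (involute x) = -involute (contractLeft d x) := by
  induction x using CliffordAlgebra.induction with
  | algebraMap r => simp [contractLeft_algebraMap]
  | ι m => simp [involute_ι, contractLeft_ι]
  | mul a b ha hb =>
    rw [map_mul, contractLeft_mul, contractLeft_mul, ha, hb, involute_involute, map_add, map_mul,
      map_mul, involute_involute]
    noncomm_ring
  | add a b ha hb =>
    simp only [map_add, ha, hb]
    abel

theorem ExteriorAlgebra.ι_mul_eq_involute_mul_ι (m : M) (x : ExteriorAlgebra R M) :
    ExteriorAlgebra.ι R m * x = involute x * ExteriorAlgebra.ι R m := by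
  induction x using CliffordAlgebra.induction with
  | algebraMap r => rw [AlgHom.commutes, Algebra.commutes]
  | ι c =>
    rw [involute_ι, neg_mul, eq_neg_iff_add_eq_zero]
    exact ExteriorAlgebra.ι_add_mul_swap m c
  | mul a b ha hb => rw [← mul_assoc, ha, mul_assoc, hb, ← mul_assoc, map_mul]
  | add a b ha hb => rw [mul_add, ha, hb, map_add, add_mul]

theorem ExteriorAlgebra.commute_of_mem_even {f : ExteriorAlgebra R M}
    (hf : f ∈ evenOdd (0 : QuadraticForm R M) 0) (x : ExteriorAlgebra R M) : Commute f x := by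
  induction f, hf using even_induction with
  | algebraMap r => exact Algebra.commutes r x
  | add u v _ _ hu hv => exact hu.add_left hv
  | ι_mul_ι_mul m₁ m₂ u _ hu =>
    refine Commute.mul_left ?_ hu
    change _ * _ * x = x * (_ * _)
    rw [mul_assoc, ι_mul_eq_involute_mul_ι m₂, ← mul_assoc, ι_mul_eq_involute_mul_ι m₁,
      involute_involute, mul_assoc]

theorem ExteriorAlgebra.contractLeft_pow_succ (d : Module.Dual R M) {f : ExteriorAlgebra R M}
    (hf : f ∈ evenOdd (0 : QuadraticForm R M) 0) (m : ℕ) :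
    contractLeft (Q := 0) d (f ^ (m + 1)) = (m + 1) • (contractLeft (Q := 0) d f * f ^ m) := by
  induction m with
  | zero => simp
  | succ m ih =>
    rw [pow_succ' f (m + 1), contractLeft_mul, ih, involute_eq_of_mem_even hf, mul_smul_comm,
      ← mul_assoc, (commute_of_mem_even hf _).eq, mul_assoc, ← pow_succ']
    module

end Contraction

section Composition

variable {R N : Type*} [CommRing R] [AddCommGroup N] [Module R N]

theorem List.foldl_comp_eq_comp (l : List (N →ₗ[R] N)) (c : N →ₗ[R] N) :
    l.foldl (fun acc d => d ∘ₗ acc) c =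
      l.foldl (fun acc d => d ∘ₗ acc) LinearMap.id ∘ₗ c := by
  induction l generalizing c with
  | nil => rfl
  | cons a t ih =>
    rw [List.foldl_cons, List.foldl_cons, ih (a ∘ₗ c), ih (a ∘ₗ LinearMap.id)]
    rfl

theorem List.foldl_comp_comp_eq_zero (l : List (N →ₗ[R] N)) {D : N →ₗ[R] N}
    (hD : D ∘ₗ D = 0) (hanti : ∀ a ∈ l, a ∘ₗ D = -(D ∘ₗ a)) (hmem : D ∈ l) :
    l.foldl (fun acc d => d ∘ₗ acc) LinearMap.id ∘ₗ D = 0 := by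
  induction l with
  | nil => simp at hmem
  | cons a t ih =>
    rw [List.foldl_cons, List.foldl_comp_eq_comp, LinearMap.comp_id, LinearMap.comp_assoc]
    rcases List.mem_cons.mp hmem with rfl | hmem
    · rw [hD, LinearMap.comp_zero]
    · rw [hanti a List.mem_cons_self, LinearMap.comp_neg, ← LinearMap.comp_assoc,
        ih (fun b hb => hanti b (List.mem_cons_of_mem a hb)) hmem, LinearMap.zero_comp, neg_zero]

end Composition

section Berezin

variable {n : ℕ}

/-- `∂_j`: this is `Dξ n i` for `j = .inl i` and `Dη n i` for `j = .inr i`. -/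
abbrev grassDeriv (j : Fin n ⊕ Fin n) : Grass n →ₗ[ℂ] Grass n :=
  contractLeft (Q := 0) (LinearMap.proj j : Module.Dual ℂ (Fin n ⊕ Fin n → ℂ))

theorem berezin_grassDeriv (j : Fin n ⊕ Fin n) (x : Grass n) :
    berezin n (grassDeriv j x) = 0 := by
  have hmem :
      grassDeriv j ∈ (List.ofFn fun i : Fin n => Dξ n i) ++ (List.ofFn fun i => Dη n i) := by
    rcases j with i | i
    · exact List.mem_append_left _ (List.mem_ofFn.mpr ⟨i, rfl⟩)
    · exact List.mem_append_right _ (List.mem_ofFn.mpr ⟨i, rfl⟩)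
  have hanti : ∀ a ∈ (List.ofFn fun i : Fin n => Dξ n i) ++ (List.ofFn fun i => Dη n i),
      a ∘ₗ grassDeriv j = -(grassDeriv j ∘ₗ a) := by
    intro a ha
    rcases List.mem_append.mp ha with h | h <;> obtain ⟨i, rfl⟩ := List.mem_ofFn.mp h <;>
      exact LinearMap.ext fun x => contractLeft_comm _ _ x
  have hsq : grassDeriv j ∘ₗ grassDeriv j = 0 :=
    LinearMap.ext fun x => contractLeft_contractLeft _ x
  change ExteriorAlgebra.algebraMapInv ((_ ∘ₗ grassDeriv j) x) = 0
  rw [List.foldl_comp_comp_eq_zero _ hsq hanti hmem, LinearMap.zero_apply, map_zero]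

/-- Integration by parts. -/
theorem berezin_tw_mul (j : Fin n ⊕ Fin n) (g F : Grass n) :
    berezin n (tw (grassDeriv j) g * F) = -berezin n (g * grassDeriv j F) := by
  have h := berezin_grassDeriv j (involute g * F)
  rw [contractLeft_mul, contractLeft_involute, involute_involute, map_add] at h
  change berezin n (-involute (grassDeriv j g) * F) = _
  linear_combination h

theorem berezin_pbr (g F : Grass n) : berezin n (pbr g F) = 0 := by
  refine (map_sum _ _ _).trans (Finset.sum_eq_zero fun i _ => ?_)
  change berezin n (tw (grassDeriv (.inl i)) g * grassDeriv (.inr i) F +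
    tw (grassDeriv (.inr i)) g * grassDeriv (.inl i) F) = 0
  rw [map_add, berezin_tw_mul, berezin_tw_mul, contractLeft_comm, mul_neg, map_neg, neg_neg,
    add_neg_cancel]

theorem pbr_pow_succ (g : Grass n) {f : Grass n}
    (hf : f ∈ evenOdd (0 : QuadraticForm ℂ (Fin n ⊕ Fin n → ℂ)) 0) (m : ℕ) :
    pbr g (f ^ (m + 1)) = (m + 1) • (pbr g f * f ^ m) := by
  simp only [pbr, Finset.sum_mul, Finset.smul_sum, Dξ, Dη,
    ExteriorAlgebra.contractLeft_pow_succ _ hf, mul_smul_comm, ← smul_add, add_mul, mul_assoc]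

end Berezin

theorem rk_invariant_general (n : ℕ) (k : ℕ) (f g : Grass n)
    (hf : f ∈ evenOdd (0 : QuadraticForm ℂ (Fin n ⊕ Fin n → ℂ)) 0) :
    (k : ℂ) * berezin n (pbr g f * f ^ (k - 1)) = 0 := by
  cases k with
  | zero => rw [Nat.cast_zero, zero_mul]
  | succ m =>
    have h := berezin_pbr g (f ^ (m + 1))
    rwa [pbr_pow_succ g hf, map_nsmul, nsmul_eq_mul, ← Nat.add_sub_cancel m 1] at h

/-- for every k ≥ 1 the polynomial r_k(f) = ∫ f^k vol on even elements f is
invariant under the adjoint action: k·∫ {g,f}·f^{k-1} vol = 0 for every g, i.e. the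
directional derivative of r_k along ad_g vanishes. -/
theorem rk_invariant (n : ℕ) (k : ℕ) (hk : 1 ≤ k) (f g : Grass n)
    (hf : f ∈ evenOdd (0 : QuadraticForm ℂ (Fin n ⊕ Fin n → ℂ)) 0) :
    (k : ℂ) * berezin n (pbr g f * f ^ (k - 1)) = 0 :=
  rk_invariant_general n k f g hf

end
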